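/- Let ω = (ε + s)/t be an elliptic element of K̃ \ K. Then its conjugate σ(ω) = (ε^q + s)/t is also elliptic, and there exists M ∈ GL₂(A) with M·ω = σ(ω) under the Möbius action if and only if the class of J_ω = tA + (ε + s)A is 2-torsion in the ideal class group Cl(Ã), i.e. there exist nonzero a, b ∈ Ã with a·J_ω² = b·Ã. -/

import Mathlib

open Matrix Polynomial

/-- The Möbius action of a `2 × 2` matrix over `A` on elements of a field extension. -/
noncomputable def mob {A Kt : Type*} [CommRing A] [Field Kt] [Algebra A Kt]
    (M : Matrix (Fin 2) (Fin 2) A) (ω : Kt) : Kt :=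
  (algebraMap A Kt (M 0 0) * ω + algebraMap A Kt (M 0 1)) /
    (algebraMap A Kt (M 1 0) * ω + algebraMap A Kt (M 1 1))

/-- `ω ∈ K̃ \ K` is elliptic: `ω = (ε + s)/t` with `t ≠ 0` and `(ε^q + s)(ε + s) ∈ tA`. -/
def IsEll (A K Kt : Type*) [CommRing A] [Field K] [Field Kt] [Algebra A K]
    [Algebra K Kt] [Algebra A Kt] (q : ℕ) (ε ω : Kt) : Prop :=
  ω ∉ Set.range (algebraMap K Kt) ∧
    ∃ s t : A, t ≠ 0 ∧ ω = (ε + algebraMap A Kt s) / algebraMap A Kt t ∧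
      ∃ u : A, (ε ^ q + algebraMap A Kt s) * (ε + algebraMap A Kt s) =
        algebraMap A Kt t * algebraMap A Kt u

/-!
The `q`-power map is additive and fixes exactly `𝔽_q`, so `e = ε + ε ^ q` lies in `A`: thus
`σ ω = (ε + s') / t'` with `s' = -(e + s)`, `t' = -t`, and `δ = ε - ε ^ q` satisfies
`δ ^ (q - 1) = -1`, so `δ` is a unit of `Ã = A[ε]`. Since `t δ = (ε + s) t - t (ε ^ q + s)` and
`(ε + s)(ε ^ q + s) = t u`, this gives `J_ω J_{σω} = t Ã`, i.e. `[J_{σω}] = [J_ω]⁻¹` in `Cl(Ã)`.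
On the other hand `J_ω = t (A + A ω)`, and `ω`, `σ ω` are `GL₂(A)`-equivalent exactly when the
lattices `A + A ω` and `A + A σ(ω)` are homothetic, i.e. when `[J_ω] = [J_{σω}] = [J_ω]⁻¹`.
-/

open Pointwise Submodule

section FiniteField

variable {F L : Type*} [Field F] [Fintype F] [Field L]

theorem add_pow_card_of_ringHom (f : F →+* L) (x y : L) :
    (x + y) ^ Fintype.card F = x ^ Fintype.card F + y ^ Fintype.card F := by
  obtain ⟨n, hp, hcard⟩ := FiniteField.card F (ringChar F)
  have : Fact (ringChar F).Prime := ⟨hp⟩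
  have := charP_of_injective_ringHom f.injective (ringChar F)
  rw [hcard]
  exact add_pow_char_pow x y _ _

theorem mem_range_of_pow_card_eq_self (f : F →+* L) {x : L} (hx : x ^ Fintype.card F = x) :
    x ∈ Set.range f := by
  have hq := Fintype.one_lt_card (α := F)
  have hroots := roots_map_of_injective_of_card_eq_natDegree f.injective
    (p := (X ^ Fintype.card F - X : F[X])) (by
      rw [FiniteField.roots_X_pow_card_sub_X, FiniteField.X_pow_card_sub_X_natDegree_eq F hq]
      rfl)
  have hx' : x ∈ ((X ^ Fintype.card F - X : F[X]).map f).roots := by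
    rw [mem_roots (by simpa using FiniteField.X_pow_card_sub_X_ne_zero L hq)]
    simp [hx]
  rw [← hroots, FiniteField.roots_X_pow_card_sub_X] at hx'
  obtain ⟨a, -, rfl⟩ := Multiset.mem_map.mp hx'
  exact ⟨a, rfl⟩

theorem exists_algebraMap_eq_add_pow_card {A : Type*} [CommRing A] [Algebra F A] [Algebra A L]
    {ε : L} (hε : (ε ^ Fintype.card F) ^ Fintype.card F = ε) :
    ∃ e : A, algebraMap A L e = ε + ε ^ Fintype.card F := by
  set f : F →+* L := (algebraMap A L).comp (algebraMap F A)
  obtain ⟨a, ha⟩ := mem_range_of_pow_card_eq_self f (x := ε + ε ^ Fintype.card F)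
    (by rw [add_pow_card_of_ringHom f, hε, add_comm])
  exact ⟨algebraMap F A a, ha⟩

theorem neg_pow_sub_two_mul_self {δ : L} (hδ : δ ≠ 0) {q : ℕ} (hq : 2 ≤ q) (h : δ ^ q = -δ) :
    -δ ^ (q - 2) * δ = 1 := by
  have : δ ^ (q - 2) * δ * δ = -1 * δ := by
    rw [mul_assoc, ← sq, ← pow_add, Nat.sub_add_cancel hq, h, neg_one_mul]
  rw [neg_mul, mul_right_cancel₀ hδ this, neg_neg]

theorem exists_mem_adjoin_mul_sub_pow_card_eq_one (A : Type*) [CommRing A] [Algebra A L]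
    (f : F →+* L) {ε : L} (hε : (ε ^ Fintype.card F) ^ Fintype.card F = ε)
    (hne : ε ^ Fintype.card F ≠ ε) :
    ∃ w ∈ Algebra.adjoin A {ε}, w * (ε - ε ^ Fintype.card F) = 1 := by
  have hδ : (ε - ε ^ Fintype.card F) ^ Fintype.card F = -(ε - ε ^ Fintype.card F) := by
    have := add_pow_card_of_ringHom f (ε - ε ^ Fintype.card F) (ε ^ Fintype.card F)
    rw [sub_add_cancel, hε] at this
    linear_combination -this
  have hεS := Algebra.self_mem_adjoin_singleton A ε
  exact ⟨_, neg_mem (pow_mem (sub_mem hεS (pow_mem hεS _)) _),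
    neg_pow_sub_two_mul_self (sub_ne_zero.mpr hne.symm) Fintype.one_lt_card hδ⟩

end FiniteField

section QuadraticOrder

variable {A R : Type*} [CommRing A] [CommRing R] [Algebra A R] {x y : R} {e s t u : A}

theorem self_mul_mem_span_pair (hxy : x + y = algebraMap A R e)
    (hu : (x + algebraMap A R s) * (y + algebraMap A R s) = algebraMap A R t * algebraMap A R u)
    {m : R} (hm : m ∈ span A {algebraMap A R t, x + algebraMap A R s}) :
    x * m ∈ span A {algebraMap A R t, x + algebraMap A R s} := by
  set J := span A {algebraMap A R t, x + algebraMap A R s}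
  have hgen : ({algebraMap A R t, x + algebraMap A R s} : Set R) ⊆
      J.comap (LinearMap.mulLeft A x) := by
    have ht : algebraMap A R t ∈ J := subset_span (by simp)
    have hs : x + algebraMap A R s ∈ J := subset_span (by simp)
    rintro _ (rfl | rfl) <;> simp only [SetLike.mem_coe, mem_comap, LinearMap.mulLeft_apply]
    · have : x * algebraMap A R t = t • (x + algebraMap A R s) - s • algebraMap A R t := by
        simp only [Algebra.smul_def]; ring
      rw [this]
      exact sub_mem (J.smul_mem t hs) (J.smul_mem s ht)
    · have : x * (x + algebraMap A R s) =
          (e + s) • (x + algebraMap A R s) - u • algebraMap A R t := by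
        simp only [Algebra.smul_def, map_add]
        linear_combination (x + algebraMap A R s) * hxy - hu
      rw [this]
      exact sub_mem (J.smul_mem _ hs) (J.smul_mem u ht)
  exact (span_le.mpr hgen : J ≤ _) hm

theorem conj_mul_mem_span_pair (hxy : x + y = algebraMap A R e)
    (hu : (x + algebraMap A R s) * (y + algebraMap A R s) = algebraMap A R t * algebraMap A R u)
    {m : R} (hm : m ∈ span A {algebraMap A R t, x + algebraMap A R s}) :
    y * m ∈ span A {algebraMap A R t, x + algebraMap A R s} := by
  have : y * m = e • m - x * m := by rw [Algebra.smul_def, ← hxy]; ring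
  rw [this]
  exact sub_mem (smul_mem _ e hm) (self_mul_mem_span_pair hxy hu hm)

theorem toSubmodule_adjoin_mul_eq {M : Submodule A R} (hM : ∀ m ∈ M, x * m ∈ M) :
    Subalgebra.toSubmodule (Algebra.adjoin A {x}) * M = M := by
  refine le_antisymm (mul_le.mpr fun a ha m hm => ?_) ?_
  · induction ha using Algebra.adjoin_induction generalizing m with
    | mem y hy => rw [Set.mem_singleton_iff.mp hy]; exact hM m hm
    | algebraMap r => rw [← Algebra.smul_def]; exact M.smul_mem r hm
    | add a b _ _ ha hb => rw [add_mul]; exact add_mem (ha m hm) (hb m hm)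
    | mul a b _ _ ha hb => rw [mul_assoc]; exact ha _ (hb m hm)
  · calc M = 1 * M := (one_mul M).symm
      _ ≤ _ := mul_le_mul_left (one_le.mpr (one_mem (Algebra.adjoin A {x}))) M

theorem span_pair_mul_span_pair_conj (hxy : x + y = algebraMap A R e)
    (hu : (x + algebraMap A R s) * (y + algebraMap A R s) = algebraMap A R t * algebraMap A R u)
    {w : R} (hw : w ∈ Algebra.adjoin A {x}) (hwxy : w * (x - y) = 1) :
    span A {algebraMap A R t, x + algebraMap A R s} *
        span A {algebraMap A R t, y + algebraMap A R s} =
      algebraMap A R t • Subalgebra.toSubmodule (Algebra.adjoin A {x}) := by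
  set S := Algebra.adjoin A {x}
  set J := span A {algebraMap A R t, x + algebraMap A R s}
  set J' := span A {algebraMap A R t, y + algebraMap A R s}
  have hxS : x ∈ S := Algebra.self_mem_adjoin_singleton A x
  have hyS : y ∈ S := by
    rw [eq_sub_of_add_eq' hxy]; exact sub_mem (algebraMap_mem S e) hxS
  have hmem : ∀ z ∈ S, algebraMap A R t * z ∈ algebraMap A R t • Subalgebra.toSubmodule S :=
    fun z hz => smul_mem_pointwise_smul z _ _ hz
  apply le_antisymm
  · rw [span_mul_span, span_le]
    rintro _ ⟨a, ha, b, hb, rfl⟩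
    simp only [Set.mem_insert_iff, Set.mem_singleton_iff] at ha hb
    change a * b ∈ algebraMap A R t • Subalgebra.toSubmodule S
    rcases ha with rfl | rfl <;> rcases hb with rfl | rfl
    · exact hmem _ (algebraMap_mem S t)
    · exact hmem _ (add_mem hyS (algebraMap_mem S s))
    · rw [mul_comm]; exact hmem _ (add_mem hxS (algebraMap_mem S s))
    · rw [hu]; exact hmem _ (algebraMap_mem S u)
  · have hSJJ' : Subalgebra.toSubmodule S * (J * J') = J * J' := by
      rw [← mul_assoc, toSubmodule_adjoin_mul_eq fun m hm => self_mul_mem_span_pair hxy hu hm]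
    have htJJ' : algebraMap A R t ∈ J * J' := by
      have hδ : algebraMap A R t * (x - y) ∈ J * J' := by
        rw [show algebraMap A R t * (x - y) = (x + algebraMap A R s) * algebraMap A R t -
          algebraMap A R t * (y + algebraMap A R s) by ring]
        exact sub_mem (mul_mem_mul (subset_span (by simp)) (subset_span (by simp)))
          (mul_mem_mul (subset_span (by simp)) (subset_span (by simp)))
      have := mul_mem_mul (show w ∈ Subalgebra.toSubmodule S from hw) hδ
      rwa [hSJJ', show w * (algebraMap A R t * (x - y)) = algebraMap A R t by
        rw [mul_left_comm, hwxy, mul_one]] at this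
    rintro _ ⟨z, hz, rfl⟩
    change algebraMap A R t * z ∈ J * J'
    rw [← hSJJ', mul_comm (algebraMap A R t) z]
    exact mul_mem_mul hz htJJ'

end QuadraticOrder

section ClassGroup

variable {A L : Type*} [CommRing A] [Field L] [Algebra A L]

theorem exists_eq_smul_iff_exists_smul_mul_self_eq {S : Subalgebra A L} {J J' : Submodule A L}
    {c : L} (hc : c ≠ 0) (hJJ' : J * J' = c • Subalgebra.toSubmodule S)
    (hSJ : Subalgebra.toSubmodule S * J = J) (hSJ' : Subalgebra.toSubmodule S * J' = J')
    (hJS : J ≤ Subalgebra.toSubmodule S) (hcJ' : c ∈ J') :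
    (∃ μ : L, μ ≠ 0 ∧ J = μ • J') ↔
      ∃ a b : L, a ∈ S ∧ b ∈ S ∧ a ≠ 0 ∧ b ≠ 0 ∧
        a • (J * J) = b • Subalgebra.toSubmodule S := by
  constructor
  · rintro ⟨μ, hμ, hJ⟩
    refine ⟨1, μ * c, one_mem S, hJS ?_, one_ne_zero, mul_ne_zero hμ hc, ?_⟩
    · rw [hJ]; exact smul_mem_pointwise_smul c μ J' hcJ'
    · calc (1 : L) • (J * J) = (μ • J') * J := by rw [one_smul, ← hJ]
        _ = (μ * c) • Subalgebra.toSubmodule S := by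
          rw [smul_mul_assoc, mul_comm J', hJJ', smul_smul]
  · rintro ⟨a, b, -, -, ha, hb, h⟩
    have hac : a * c ≠ 0 := mul_ne_zero ha hc
    have key : (a * c) • J = b • J' :=
      calc (a * c) • J = a • (J * J * J') := by
            rw [mul_assoc, hJJ', mul_smul_comm, mul_comm J, hSJ, smul_smul]
        _ = b • J' := by rw [← smul_mul_assoc, h, smul_mul_assoc, hSJ']
    refine ⟨(a * c)⁻¹ * b, mul_ne_zero (inv_ne_zero hac) hb, ?_⟩
    rw [mul_smul, ← key, inv_smul_smul₀ hac]

theorem smul_span_one_div (x : L) {c : L} (hc : c ≠ 0) :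
    c • span A {1, x / c} = span A {c, x} := by
  rw [smul_span, Set.smul_set_insert, Set.smul_set_singleton, smul_eq_mul, smul_eq_mul, mul_one,
    mul_div_cancel₀ _ hc]

theorem image_mul_coe_submodule (a : L) (M : Submodule A L) :
    (fun x => a * x) '' (M : Set L) = ((a • M : Submodule A L) : Set L) := by
  rw [coe_pointwise_smul]; rfl

end ClassGroup

section Mobius

variable {A L : Type*} [CommRing A] [Field L] [Algebra A L] {ω ω' : L}

theorem isUnit_det_fin_two_of_GL (M : GL (Fin 2) A) :
    IsUnit ((M : Matrix (Fin 2) (Fin 2) A) 0 0 * (M : Matrix (Fin 2) (Fin 2) A) 1 1 -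
      (M : Matrix (Fin 2) (Fin 2) A) 0 1 * (M : Matrix (Fin 2) (Fin 2) A) 1 0) := by
  rw [← det_fin_two]; exact (isUnit_iff_isUnit_det _).mp M.isUnit

theorem mob_denom_ne_zero (hω : LinearIndependent A ![1, ω]) (M : GL (Fin 2) A) :
    algebraMap A L ((M : Matrix (Fin 2) (Fin 2) A) 1 0) * ω +
      algebraMap A L ((M : Matrix (Fin 2) (Fin 2) A) 1 1) ≠ 0 := by
  have : Nontrivial A := (algebraMap A L).domain_nontrivial
  intro h
  obtain ⟨hd, hc⟩ := hω.eq_zero_of_pair (s := (M : Matrix (Fin 2) (Fin 2) A) 1 1)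
    (t := (M : Matrix (Fin 2) (Fin 2) A) 1 0) (by
      simp only [Algebra.smul_def, mul_one]; rw [← h]; ring)
  have := isUnit_det_fin_two_of_GL M
  rw [hd, hc, mul_zero, mul_zero, sub_zero] at this
  exact not_isUnit_zero this

theorem smul_span_one_mob (hω : LinearIndependent A ![1, ω]) (M : GL (Fin 2) A) :
    (algebraMap A L ((M : Matrix (Fin 2) (Fin 2) A) 1 0) * ω +
        algebraMap A L ((M : Matrix (Fin 2) (Fin 2) A) 1 1)) •
      span A {1, mob (M : Matrix (Fin 2) (Fin 2) A) ω} = span A {1, ω} := by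
  obtain ⟨D, hD⟩ := isUnit_det_fin_two_of_GL M
  have hden := mob_denom_ne_zero hω M
  set a := (M : Matrix (Fin 2) (Fin 2) A) 0 0
  set b := (M : Matrix (Fin 2) (Fin 2) A) 0 1
  set c := (M : Matrix (Fin 2) (Fin 2) A) 1 0
  set d := (M : Matrix (Fin 2) (Fin 2) A) 1 1
  set den := algebraMap A L c * ω + algebraMap A L d
  have hnum : den * mob (M : Matrix (Fin 2) (Fin 2) A) ω =
      algebraMap A L a * ω + algebraMap A L b := mul_div_cancel₀ _ hden
  have hDinv : algebraMap A L ↑D⁻¹ * (algebraMap A L a * algebraMap A L d -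
      algebraMap A L b * algebraMap A L c) = 1 := by
    rw [← map_mul, ← map_mul, ← map_sub, ← map_mul, ← hD, D.inv_mul, map_one]
  rw [smul_span, Set.smul_set_insert, Set.smul_set_singleton, smul_eq_mul, smul_eq_mul, mul_one,
    hnum]
  apply le_antisymm <;> rw [span_le, Set.insert_subset_iff, Set.singleton_subset_iff] <;>
    simp only [SetLike.mem_coe, mem_span_pair, Algebra.smul_def, mul_one]
  · exact ⟨⟨d, c, add_comm _ _⟩, ⟨b, a, add_comm _ _⟩⟩
  · refine ⟨⟨↑D⁻¹ * a, -(↑D⁻¹ * c), ?_⟩, ⟨-(↑D⁻¹ * b), ↑D⁻¹ * d, ?_⟩⟩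
    · simp only [map_mul, map_neg]; linear_combination hDinv
    · simp only [map_mul, map_neg]; linear_combination ω * hDinv

theorem exists_mob_eq_of_span_eq (hω : LinearIndependent A ![1, ω]) {μ : L} (hμ : μ ≠ 0)
    (h : span A {1, ω} = μ • span A {1, ω'}) :
    ∃ M : GL (Fin 2) A, mob (M : Matrix (Fin 2) (Fin 2) A) ω = ω' := by
  have mem_smul : ∀ z ∈ span A {1, ω'}, μ * z ∈ span A {1, ω} := fun z hz => by
    rw [h]; exact smul_mem_pointwise_smul z μ _ hz
  obtain ⟨d₁, c₁, h₁⟩ := mem_span_pair.mp (mem_smul 1 (subset_span (by simp)))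
  obtain ⟨b₁, a₁, h₂⟩ := mem_span_pair.mp (mem_smul ω' (subset_span (by simp)))
  obtain ⟨z₁, hz₁, hz₁'⟩ := (mem_smul_pointwise_iff_exists _ _ _).mp
    (h ▸ subset_span (by simp) : (1 : L) ∈ μ • span A {1, ω'})
  obtain ⟨z₂, hz₂, hz₂'⟩ := (mem_smul_pointwise_iff_exists _ _ _).mp
    (h ▸ subset_span (by simp) : ω ∈ μ • span A {1, ω'})
  obtain ⟨d₂, c₂, rfl⟩ := mem_span_pair.mp hz₁
  obtain ⟨b₂, a₂, rfl⟩ := mem_span_pair.mp hz₂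
  rw [smul_eq_mul] at hz₁' hz₂'
  simp only [Algebra.smul_def, mul_one] at h₁ h₂ hz₁' hz₂'
  obtain ⟨e₁, e₂⟩ := hω.eq_of_pair (s := c₂ * b₁ + d₂ * d₁) (t := c₂ * a₁ + d₂ * c₁)
    (s' := 1) (t' := 0) (by
      simp only [Algebra.smul_def, map_add, map_mul, map_one, map_zero, mul_one]
      linear_combination hz₁' + algebraMap A L c₂ * h₂ + algebraMap A L d₂ * h₁)
  obtain ⟨e₃, e₄⟩ := hω.eq_of_pair (s := a₂ * b₁ + b₂ * d₁) (t := a₂ * a₁ + b₂ * c₁)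
    (s' := 0) (t' := 1) (by
      simp only [Algebra.smul_def, map_add, map_mul, map_one, map_zero, mul_one]
      linear_combination hz₂' + algebraMap A L a₂ * h₂ + algebraMap A L b₂ * h₁)
  have hNM : !![a₂, b₂; c₂, d₂] * !![a₁, b₁; c₁, d₁] = 1 := by
    ext i j
    fin_cases i <;> fin_cases j <;> simp [mul_apply, Fin.sum_univ_two] <;> assumption
  refine ⟨⟨!![a₁, b₁; c₁, d₁], !![a₂, b₂; c₂, d₂], mul_eq_one_comm.mp hNM, hNM⟩, ?_⟩
  simp only [mob, of_apply, cons_val', cons_val_zero, cons_val_one, empty_val', cons_val_fin_one]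
  rw [add_comm (_ * ω), h₂, add_comm (_ * ω), h₁, mul_div_cancel_left₀ _ hμ]

theorem exists_mob_eq_iff (hω : LinearIndependent A ![1, ω]) :
    (∃ M : GL (Fin 2) A, mob (M : Matrix (Fin 2) (Fin 2) A) ω = ω') ↔
      ∃ μ : L, μ ≠ 0 ∧ span A {1, ω} = μ • span A {1, ω'} := by
  constructor
  · rintro ⟨M, rfl⟩
    exact ⟨_, mob_denom_ne_zero hω M, (smul_span_one_mob hω M).symm⟩
  · rintro ⟨μ, hμ, h⟩
    exact exists_mob_eq_of_span_eq hω hμ h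

end Mobius

theorem algebraMap_ne_zero_of_isFractionRing (A K : Type*) {L : Type*} [CommRing A] [Field K]
    [Field L] [Algebra A K] [IsFractionRing A K] [Algebra K L] [Algebra A L] [IsScalarTower A K L]
    {t : A} (ht : t ≠ 0) : algebraMap A L t ≠ 0 := by
  rw [IsScalarTower.algebraMap_apply A K L, _root_.map_ne_zero]
  exact (map_ne_zero_iff _ (IsFractionRing.injective A K)).mpr ht

section Elliptic

variable {A K L : Type*} [CommRing A] [Field K] [Field L] [Algebra A K] [IsFractionRing A K]
  [Algebra K L] [Algebra A L] [IsScalarTower A K L]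

theorem add_algebraMap_div_notMem_range {x : L} (hx : x ∉ Set.range (algebraMap K L)) (s : A)
    {t : A} (ht : t ≠ 0) :
    (x + algebraMap A L s) / algebraMap A L t ∉ Set.range (algebraMap K L) := by
  rintro ⟨k, hk⟩
  refine hx ⟨k * algebraMap A K t - algebraMap A K s, ?_⟩
  rw [map_sub, map_mul, hk, ← IsScalarTower.algebraMap_apply, ← IsScalarTower.algebraMap_apply,
    div_mul_cancel₀ _ (algebraMap_ne_zero_of_isFractionRing A K ht), add_sub_cancel_right]

variable (A) in
theorem linearIndependent_one_of_notMem_range {ω : L}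
    (hω : ω ∉ Set.range (algebraMap K L)) : LinearIndependent A ![1, ω] := by
  refine LinearIndependent.restrict_scalars' (K := K) A ?_
  rw [LinearIndependent.pair_iff' one_ne_zero]
  intro a ha
  exact hω ⟨a, by rw [Algebra.algebraMap_eq_smul_one, ha]⟩

theorem isEll_conj {q : ℕ} {ε : L} (hε : ε ∉ Set.range (algebraMap K L)) {e s t u : A}
    (he : algebraMap A L e = ε + ε ^ q) (ht : t ≠ 0)
    (hu : (ε ^ q + algebraMap A L s) * (ε + algebraMap A L s) =
      algebraMap A L t * algebraMap A L u) :
    IsEll A K L q ε ((ε ^ q + algebraMap A L s) / algebraMap A L t) := by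
  have hconj : (ε ^ q + algebraMap A L s) / algebraMap A L t =
      (ε + algebraMap A L (-(e + s))) / algebraMap A L (-t) := by
    rw [map_neg, map_neg, map_add, he, ← neg_div_neg_eq]; ring_nf
  rw [hconj]
  refine ⟨add_algebraMap_div_notMem_range hε _ (neg_ne_zero.mpr ht), _, _, neg_ne_zero.mpr ht,
    rfl, -u, ?_⟩
  simp only [map_neg, map_add, he]
  linear_combination hu

theorem exists_mob_eq_conj_iff {x y : L} (hx : x ∉ Set.range (algebraMap K L)) {e s t u : A}
    (ht : t ≠ 0) (hxy : x + y = algebraMap A L e)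
    (hu : (x + algebraMap A L s) * (y + algebraMap A L s) = algebraMap A L t * algebraMap A L u)
    {w : L} (hw : w ∈ Algebra.adjoin A {x}) (hwxy : w * (x - y) = 1) :
    (∃ M : GL (Fin 2) A, mob (M : Matrix (Fin 2) (Fin 2) A)
        ((x + algebraMap A L s) / algebraMap A L t) = (y + algebraMap A L s) / algebraMap A L t) ↔
      ∃ a b : L, a ∈ Algebra.adjoin A {x} ∧ b ∈ Algebra.adjoin A {x} ∧ a ≠ 0 ∧ b ≠ 0 ∧
        a • (span A {algebraMap A L t, x + algebraMap A L s} *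
          span A {algebraMap A L t, x + algebraMap A L s}) =
          b • Subalgebra.toSubmodule (Algebra.adjoin A {x}) := by
  set S := Algebra.adjoin A {x}
  set J := span A {algebraMap A L t, x + algebraMap A L s}
  set J' := span A {algebraMap A L t, y + algebraMap A L s}
  have htL : algebraMap A L t ≠ 0 := algebraMap_ne_zero_of_isFractionRing A K ht
  have hyx : y + x = algebraMap A L e := by rw [add_comm, hxy]
  have hSJ : Subalgebra.toSubmodule S * J = J :=
    toSubmodule_adjoin_mul_eq fun _ hm => self_mul_mem_span_pair hxy hu hm
  have hSJ' : Subalgebra.toSubmodule S * J' = J' :=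
    toSubmodule_adjoin_mul_eq fun _ hm => conj_mul_mem_span_pair hyx (by rw [mul_comm, hu]) hm
  have hJS : J ≤ Subalgebra.toSubmodule S := by
    rw [span_le, Set.insert_subset_iff, Set.singleton_subset_iff]
    exact ⟨algebraMap_mem S t,
      add_mem (Algebra.self_mem_adjoin_singleton A x) (algebraMap_mem S s)⟩
  have hω := linearIndependent_one_of_notMem_range A (add_algebraMap_div_notMem_range hx s ht)
  rw [exists_mob_eq_iff hω, ← exists_eq_smul_iff_exists_smul_mul_self_eq htL
    (span_pair_mul_span_pair_conj hxy hu hw hwxy) hSJ hSJ' hJS (subset_span (by simp)),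
    ← smul_span_one_div _ htL, ← smul_span_one_div (y + algebraMap A L s) htL]
  refine exists_congr fun μ => and_congr_right fun _ => ?_
  rw [smul_comm μ, (MulAction.injective₀ htL).eq_iff]

end Elliptic

theorem stmt_13_general (Fq : Type*) [Field Fq] [Fintype Fq] (q : ℕ) (hq : Fintype.card Fq = q)
    (A : Type*) [CommRing A] [Algebra Fq A]
    (K : Type*) [Field K] [Algebra A K] [IsFractionRing A K]
    (Kt : Type*) [Field Kt] [Algebra K Kt] [Algebra A Kt] [IsScalarTower A K Kt]
    (ε : Kt) (hε1 : ε ∉ Set.range (algebraMap K Kt)) (hε2 : ε ^ q ^ 2 = ε)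
    (hε3 : ε ^ q ≠ ε)
    (σ : Kt ≃ₐ[K] Kt) (hσ : σ ε = ε ^ q)
    (s t : A) (ht : t ≠ 0)
    (hell : ∃ u : A, (ε ^ q + algebraMap A Kt s) * (ε + algebraMap A Kt s) =
      algebraMap A Kt t * algebraMap A Kt u)
    (ω : Kt) (hω : ω = (ε + algebraMap A Kt s) / algebraMap A Kt t) :
    -- `σ(ω) = (ε^q + s)/t` is also elliptic
    σ ω = (ε ^ q + algebraMap A Kt s) / algebraMap A Kt t ∧
    IsEll A K Kt q ε (σ ω) ∧
    -- `ω ≡ σ(ω)` iff the class of `J_ω` is `2`-torsion in `Cl(Ã)`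
    ((∃ M : GL (Fin 2) A, mob (↑M : Matrix (Fin 2) (Fin 2) A) ω = σ ω) ↔
      ∃ a b : Kt, a ∈ Algebra.adjoin A {ε} ∧ b ∈ Algebra.adjoin A {ε} ∧ a ≠ 0 ∧ b ≠ 0 ∧
        (fun x => a * x) ''
            ((Submodule.span A ({algebraMap A Kt t, ε + algebraMap A Kt s} : Set Kt) *
              Submodule.span A ({algebraMap A Kt t, ε + algebraMap A Kt s} : Set Kt) :
              Submodule A Kt) : Set Kt) =
          (fun x => b * x) '' ((Algebra.adjoin A {ε} : Subalgebra A Kt) : Set Kt)) := by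
  subst hq
  obtain ⟨u, hu⟩ := hell
  have hεq : (ε ^ Fintype.card Fq) ^ Fintype.card Fq = ε := by rw [← pow_mul, ← sq]; exact hε2
  obtain ⟨e, he⟩ := exists_algebraMap_eq_add_pow_card (A := A) hεq
  obtain ⟨w, hwS, hw⟩ := exists_mem_adjoin_mul_sub_pow_card_eq_one A
    ((algebraMap A Kt).comp (algebraMap Fq A)) hεq hε3
  have hσA : ∀ a : A, σ (algebraMap A Kt a) = algebraMap A Kt a := (σ.restrictScalars A).commutes
  have hσω : σ ω = (ε ^ Fintype.card Fq + algebraMap A Kt s) / algebraMap A Kt t := by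
    rw [hω, map_div₀, map_add, hσ, hσA, hσA]
  refine ⟨hσω, hσω ▸ isEll_conj hε1 he ht hu, ?_⟩
  rw [hσω, hω, exists_mob_eq_conj_iff hε1 ht he.symm (by rw [mul_comm]; exact hu) hwS hw]
  simp only [image_mul_coe_submodule, ← Subalgebra.coe_toSubmodule, SetLike.coe_set_eq]

/-- **Theorem 2.8 (pointwise form).** For an elliptic element `ω = (ε+s)/t`, the conjugate
`σ(ω) = (ε^q+s)/t` is elliptic, and `ω` is `GL₂(A)`-equivalent to `σ(ω)` if and only if
the class of `J_ω = tA + (ε+s)A` is `2`-torsion in `Cl(Ã)`, i.e. `a·J_ω² = b·Ã` for some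
nonzero `a, b ∈ Ã`. -/
theorem stmt_13 (Fq : Type*) [Field Fq] [Fintype Fq] (q : ℕ) (hq : Fintype.card Fq = q)
    (A : Type*) [CommRing A] [IsDomain A] [IsDedekindDomain A] [Algebra Fq A]
    (K : Type*) [Field K] [Algebra A K] [IsFractionRing A K]
    (hunits : ∀ u : Aˣ, ∃ α : Fqˣ, algebraMap Fq A (α : Fq) = (u : A))
    (Kt : Type*) [Field Kt] [Algebra K Kt] [Algebra A Kt] [IsScalarTower A K Kt]
    (ε : Kt) (hε1 : ε ∉ Set.range (algebraMap K Kt)) (hε2 : ε ^ q ^ 2 = ε)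
    (hε3 : ε ^ q ≠ ε) (hgen : Algebra.adjoin K {ε} = ⊤)
    (σ : Kt ≃ₐ[K] Kt) (hσ : σ ε = ε ^ q)
    (hAt : Algebra.adjoin A {ε} = integralClosure A Kt)
    (s t : A) (ht : t ≠ 0)
    (hell : ∃ u : A, (ε ^ q + algebraMap A Kt s) * (ε + algebraMap A Kt s) =
      algebraMap A Kt t * algebraMap A Kt u)
    (ω : Kt) (hω : ω = (ε + algebraMap A Kt s) / algebraMap A Kt t) :
    -- `σ(ω) = (ε^q + s)/t` is also elliptic
    σ ω = (ε ^ q + algebraMap A Kt s) / algebraMap A Kt t ∧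
    IsEll A K Kt q ε (σ ω) ∧
    -- `ω ≡ σ(ω)` iff the class of `J_ω` is `2`-torsion in `Cl(Ã)`
    ((∃ M : GL (Fin 2) A, mob (↑M : Matrix (Fin 2) (Fin 2) A) ω = σ ω) ↔
      ∃ a b : Kt, a ∈ Algebra.adjoin A {ε} ∧ b ∈ Algebra.adjoin A {ε} ∧ a ≠ 0 ∧ b ≠ 0 ∧
        (fun x => a * x) ''
            ((Submodule.span A ({algebraMap A Kt t, ε + algebraMap A Kt s} : Set Kt) *
              Submodule.span A ({algebraMap A Kt t, ε + algebraMap A Kt s} : Set Kt) :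
              Submodule A Kt) : Set Kt) =
          (fun x => b * x) '' ((Algebra.adjoin A {ε} : Subalgebra A Kt) : Set Kt)) :=
  stmt_13_general Fq q hq A K Kt ε hε1 hε2 hε3 σ hσ s t ht hell ω hω
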